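/- For every integer n ≥ 1, every ε with 0 < ε < 1, every θ ∈ (0, π/2) and every φ ∈ ℝ with cos(nφ) > 0, the Christoffel symbol Γ^θ_{φφ}(θ, φ) of the sectoral harmonic surface of degree n is strictly negative. -/

import Mathlib

noncomputable section
open Real Set

/-- Partial derivative with respect to the first argument (θ). -/
def pθ (f : ℝ → ℝ → ℝ) (t p : ℝ) : ℝ := deriv (fun x => f x p) t

/-- Partial derivative with respect to the second argument (φ). -/
def pφ (f : ℝ → ℝ → ℝ) (t p : ℝ) : ℝ := deriv (fun x => f t x) p

/-- Metric coefficient g_θθ = r_θ² + r² of the surface in polar form r = r(θ,φ). -/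
def gθθ (r : ℝ → ℝ → ℝ) (t p : ℝ) : ℝ := (pθ r t p) ^ 2 + (r t p) ^ 2

/-- Metric coefficient g_θφ = g_φθ = r_θ r_φ. -/
def gθφ (r : ℝ → ℝ → ℝ) (t p : ℝ) : ℝ := pθ r t p * pφ r t p

/-- Metric coefficient g_φφ = r_φ² + r² sin²θ. -/
def gφφ (r : ℝ → ℝ → ℝ) (t p : ℝ) : ℝ := (pφ r t p) ^ 2 + (r t p) ^ 2 * (sin t) ^ 2

/-- Determinant of the first fundamental form. -/
def gdet (r : ℝ → ℝ → ℝ) (t p : ℝ) : ℝ := gθθ r t p * gφφ r t p - (gθφ r t p) ^ 2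

/-- Christoffel symbol Γ^θ_{θθ}, computed from Γ^a_{bc} = ½ g^{ad}(∂_c g_{bd} + ∂_b g_{cd} − ∂_d g_{bc})
with the explicit inverse of the 2×2 metric. -/
def Γθθθ (r : ℝ → ℝ → ℝ) (t p : ℝ) : ℝ :=
  (1 / 2) * ((gφφ r t p / gdet r t p) * pθ (gθθ r) t p
    + (-(gθφ r t p) / gdet r t p) * (2 * pθ (gθφ r) t p - pφ (gθθ r) t p))

/-- Christoffel symbol Γ^θ_{θφ} = Γ^θ_{φθ}. -/
def Γθθφ (r : ℝ → ℝ → ℝ) (t p : ℝ) : ℝ :=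
  (1 / 2) * ((gφφ r t p / gdet r t p) * pφ (gθθ r) t p
    + (-(gθφ r t p) / gdet r t p) * pθ (gφφ r) t p)

/-- Christoffel symbol Γ^θ_{φφ}. -/
def Γθφφ (r : ℝ → ℝ → ℝ) (t p : ℝ) : ℝ :=
  (1 / 2) * ((gφφ r t p / gdet r t p) * (2 * pφ (gθφ r) t p - pθ (gφφ r) t p)
    + (-(gθφ r t p) / gdet r t p) * pφ (gφφ r) t p)

/-- Christoffel symbol Γ^φ_{θθ}. -/
def Γφθθ (r : ℝ → ℝ → ℝ) (t p : ℝ) : ℝ :=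
  (1 / 2) * ((-(gθφ r t p) / gdet r t p) * pθ (gθθ r) t p
    + (gθθ r t p / gdet r t p) * (2 * pθ (gθφ r) t p - pφ (gθθ r) t p))

/-- Christoffel symbol Γ^φ_{θφ} = Γ^φ_{φθ}. -/
def Γφθφ (r : ℝ → ℝ → ℝ) (t p : ℝ) : ℝ :=
  (1 / 2) * ((-(gθφ r t p) / gdet r t p) * pφ (gθθ r) t p
    + (gθθ r t p / gdet r t p) * pθ (gφφ r) t p)

/-- Christoffel symbol Γ^φ_{φφ}. -/
def Γφφφ (r : ℝ → ℝ → ℝ) (t p : ℝ) : ℝ :=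
  (1 / 2) * ((-(gθφ r t p) / gdet r t p) * (2 * pφ (gθφ r) t p - pθ (gφφ r) t p)
    + (gθθ r t p / gdet r t p) * pφ (gφφ r) t p)

/-- `r` is a smooth positive function on (0,π) × ℝ. -/
def SmoothPolar (r : ℝ → ℝ → ℝ) : Prop :=
  ContDiffOn ℝ (⊤ : ℕ∞) (fun q : ℝ × ℝ => r q.1 q.2) (Ioo 0 π ×ˢ univ) ∧
  ∀ t ∈ Ioo 0 π, ∀ p : ℝ, 0 < r t p

/-- The two geodesic equations at parameter value `s` for the curve `(θ, φ)` on the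
surface in polar form `r = r(θ,φ)`. -/
def GeodesicEq (r : ℝ → ℝ → ℝ) (θ φ : ℝ → ℝ) (s : ℝ) : Prop :=
  deriv (deriv θ) s + Γθθθ r (θ s) (φ s) * (deriv θ s) ^ 2
    + 2 * Γθθφ r (θ s) (φ s) * deriv θ s * deriv φ s
    + Γθφφ r (θ s) (φ s) * (deriv φ s) ^ 2 = 0 ∧
  deriv (deriv φ) s + Γφθθ r (θ s) (φ s) * (deriv θ s) ^ 2
    + 2 * Γφθφ r (θ s) (φ s) * deriv θ s * deriv φ s
    + Γφφφ r (θ s) (φ s) * (deriv φ s) ^ 2 = 0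

/-- Unit-speed condition g_θθ θ'² + 2 g_θφ θ'φ' + g_φφ φ'² = 1. -/
def UnitSpeed (r : ℝ → ℝ → ℝ) (θ φ : ℝ → ℝ) (s : ℝ) : Prop :=
  gθθ r (θ s) (φ s) * (deriv θ s) ^ 2
    + 2 * gθφ r (θ s) (φ s) * deriv θ s * deriv φ s
    + gφφ r (θ s) (φ s) * (deriv φ s) ^ 2 = 1

/-- The sectoral harmonic surface of degree `n`: r(θ,φ) = 1 + ε sinⁿθ cos(nφ). -/
def secR (n : ℕ) (ε : ℝ) (t p : ℝ) : ℝ := 1 + ε * (sin t) ^ n * cos (n * p)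

lemma hd_sinpow (n : ℕ) (t : ℝ) :
    HasDerivAt (fun x => sin x ^ n) ((n : ℝ) * sin t ^ (n - 1) * cos t) t :=
  (Real.hasDerivAt_sin t).pow n

lemma hd_cosn (n : ℕ) (p : ℝ) :
    HasDerivAt (fun y : ℝ => cos ((n : ℝ) * y)) (-sin ((n : ℝ) * p) * n) p := by
  simpa [Function.comp_def] using (Real.hasDerivAt_cos ((n : ℝ) * p)).comp p ((hasDerivAt_id p).const_mul (n : ℝ))

lemma hd_sinn (n : ℕ) (p : ℝ) :
    HasDerivAt (fun y : ℝ => sin ((n : ℝ) * y)) (cos ((n : ℝ) * p) * n) p := by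
  simpa [Function.comp_def] using (Real.hasDerivAt_sin ((n : ℝ) * p)).comp p ((hasDerivAt_id p).const_mul (n : ℝ))

lemma pθ_secR (n : ℕ) (ε t p : ℝ) :
    pθ (secR n ε) t p = ε * ((n : ℝ) * sin t ^ (n - 1) * cos t) * cos (n * p) := by
  have h := (((hd_sinpow n t).const_mul ε).mul_const (cos ((n : ℝ) * p))).const_add 1
  have h2 : (fun x => secR n ε x p) = fun x => 1 + ε * sin x ^ n * cos ((n:ℝ) * p) := by
    funext x; simp [secR, mul_assoc]
  rw [pθ, h2, h.deriv]

lemma pφ_secR (n : ℕ) (ε t p : ℝ) :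
    pφ (secR n ε) t p = -(ε * sin t ^ n * (sin ((n : ℝ) * p) * n)) := by
  have h := ((hd_cosn n p).const_mul (ε * sin t ^ n)).const_add 1
  have h2 : (fun y => secR n ε t y) = fun y => 1 + (ε * sin t ^ n) * cos ((n:ℝ) * y) := by
    funext y; simp [secR, mul_assoc]
  rw [pφ, h2, h.deriv]; ring

lemma pθ_gφφ_secR (n : ℕ) (ε t p : ℝ) :
    pθ (gφφ (secR n ε)) t p =
      2 * (ε * sin t ^ n * (sin ((n:ℝ)*p) * n)) * (ε * ((n:ℝ) * sin t ^ (n-1) * cos t) * (sin ((n:ℝ)*p) * n))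
      + 2 * (1 + ε * sin t ^ n * cos ((n:ℝ)*p)) * (ε * ((n:ℝ) * sin t ^ (n-1) * cos t) * cos ((n:ℝ)*p)) * sin t ^ 2
      + (1 + ε * sin t ^ n * cos ((n:ℝ)*p)) ^ 2 * (2 * sin t * cos t) := by
  have hfun : (fun x => gφφ (secR n ε) x p) =
      fun x => (ε * sin x ^ n * (sin ((n:ℝ)*p) * n)) ^ 2
        + (1 + ε * sin x ^ n * cos ((n:ℝ)*p)) ^ 2 * sin x ^ 2 := by
    funext x; simp only [gφφ, pφ_secR, secR]; try push_cast; try ring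
  have h1 : HasDerivAt (fun x => ε * sin x ^ n * (sin ((n:ℝ)*p) * n))
      (ε * ((n:ℝ) * sin t ^ (n-1) * cos t) * (sin ((n:ℝ)*p) * n)) t :=
    ((hd_sinpow n t).const_mul ε).mul_const _
  have h3 : HasDerivAt (fun x => 1 + ε * sin x ^ n * cos ((n:ℝ)*p))
      (ε * ((n:ℝ) * sin t ^ (n-1) * cos t) * cos ((n:ℝ)*p)) t :=
    (((hd_sinpow n t).const_mul ε).mul_const _).const_add 1
  have h5 : HasDerivAt (fun x : ℝ => sin x ^ 2) (2 * sin t ^ (2-1) * cos t) t :=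
    (Real.hasDerivAt_sin t).pow 2
  have htot := (h1.pow 2).add ((h3.pow 2).mul h5)
  rw [pθ, hfun]; erw [htot.deriv]; simp only [Pi.pow_apply]; try ring

lemma pφ_gθφ_secR (n : ℕ) (ε t p : ℝ) :
    pφ (gθφ (secR n ε)) t p =
      (ε * ((n:ℝ) * sin t ^ (n-1) * cos t) * (-sin ((n:ℝ)*p) * n)) * (-(ε * sin t ^ n * (sin ((n:ℝ)*p) * n)))
      + (ε * ((n:ℝ) * sin t ^ (n-1) * cos t) * cos ((n:ℝ)*p)) * (-(ε * sin t ^ n * (cos ((n:ℝ)*p) * n * n))) := by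
  have hfun : (fun y => gθφ (secR n ε) t y) =
      fun y => (ε * ((n:ℝ) * sin t ^ (n-1) * cos t) * cos ((n:ℝ)*y)) * (-(ε * sin t ^ n * (sin ((n:ℝ)*y) * n))) := by
    funext y; simp only [gθφ, pθ_secR, pφ_secR]; try push_cast; try ring
  have h1 : HasDerivAt (fun y => ε * ((n:ℝ) * sin t ^ (n-1) * cos t) * cos ((n:ℝ)*y))
      ((ε * ((n:ℝ) * sin t ^ (n-1) * cos t)) * (-sin ((n:ℝ)*p) * n)) p :=
    (hd_cosn n p).const_mul _
  have h2 : HasDerivAt (fun y => -(ε * sin t ^ n * (sin ((n:ℝ)*y) * n)))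
      (-((ε * sin t ^ n) * (cos ((n:ℝ)*p) * n * n))) p := by
    have := (((hd_sinn n p).mul_const (n:ℝ)).const_mul (ε * sin t ^ n)).neg
    convert this using 1 <;> try ring
    all_goals rfl
  have htot := h1.mul h2
  rw [pφ, hfun]; erw [htot.deriv]; try ring

lemma pφ_gφφ_secR (n : ℕ) (ε t p : ℝ) :
    pφ (gφφ (secR n ε)) t p =
      2 * (ε * sin t ^ n * (sin ((n:ℝ)*p) * n)) * (ε * sin t ^ n * (cos ((n:ℝ)*p) * n * n))
      + 2 * (1 + ε * sin t ^ n * cos ((n:ℝ)*p)) * ((ε * sin t ^ n) * (-sin ((n:ℝ)*p) * n)) * sin t ^ 2 := by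
  have hfun : (fun y => gφφ (secR n ε) t y) =
      fun y => (ε * sin t ^ n * (sin ((n:ℝ)*y) * n)) ^ 2
        + (1 + ε * sin t ^ n * cos ((n:ℝ)*y)) ^ 2 * sin t ^ 2 := by
    funext y; simp only [gφφ, pφ_secR, secR]; try push_cast; try ring
  have h1 : HasDerivAt (fun y => ε * sin t ^ n * (sin ((n:ℝ)*y) * n))
      (ε * sin t ^ n * (cos ((n:ℝ)*p) * n * n)) p := by
    have := ((hd_sinn n p).mul_const (n:ℝ)).const_mul (ε * sin t ^ n)
    convert this using 1; try ring
  have h2 : HasDerivAt (fun y => 1 + ε * sin t ^ n * cos ((n:ℝ)*y))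
      ((ε * sin t ^ n) * (-sin ((n:ℝ)*p) * n)) p :=
    ((hd_cosn n p).const_mul _).const_add 1
  have htot := (h1.pow 2).add ((h2.pow 2).mul_const (sin t ^ 2))
  rw [pφ, hfun]; erw [htot.deriv]; try ring

lemma Γθφφ_eq_div (r : ℝ → ℝ → ℝ) (t p : ℝ) (h : gdet r t p ≠ 0) :
    Γθφφ r t p = (gφφ r t p * (2 * pφ (gθφ r) t p - pθ (gφφ r) t p)
      + (-(gθφ r t p)) * pφ (gφφ r) t p) / (2 * gdet r t p) := by
  unfold Γθφφ; field_simp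

lemma keyneg (e m u s c C S : ℝ) (he : 0 < e) (hm : 0 < m) (hu : 0 < u)
    (hs : 0 < s) (hc : 0 < c) (hC : 0 < C) :
    ((e*(u*s)*(S*m))^2 + (1+e*(u*s)*C)^2*s^2)
      * (2 * ((e*(m*u*c)*(-S*m)) * (-(e*(u*s)*(S*m))) + (e*(m*u*c)*C) * (-(e*(u*s)*(C*m*m))))
         - (2*(e*(u*s)*(S*m))*(e*(m*u*c)*(S*m)) + 2*(1+e*(u*s)*C)*(e*(m*u*c)*C)*s^2
            + (1+e*(u*s)*C)^2*(2*s*c)))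
      + (-((e*(m*u*c)*C) * (-(e*(u*s)*(S*m)))))
        * (2*(e*(u*s)*(S*m))*(e*(u*s)*(C*m*m)) + 2*(1+e*(u*s)*C)*((e*(u*s))*(-S*m))*s^2) < 0 := by
  have key : ((e*(u*s)*(S*m))^2 + (1+e*(u*s)*C)^2*s^2)
      * (2 * ((e*(m*u*c)*(-S*m)) * (-(e*(u*s)*(S*m))) + (e*(m*u*c)*C) * (-(e*(u*s)*(C*m*m))))
         - (2*(e*(u*s)*(S*m))*(e*(m*u*c)*(S*m)) + 2*(1+e*(u*s)*C)*(e*(m*u*c)*C)*s^2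
            + (1+e*(u*s)*C)^2*(2*s*c)))
      + (-((e*(m*u*c)*C) * (-(e*(u*s)*(S*m)))))
        * (2*(e*(u*s)*(S*m))*(e*(u*s)*(C*m*m)) + 2*(1+e*(u*s)*C)*((e*(u*s))*(-S*m))*s^2)
      = -(2*(1+e*(u*s)*C)*s^2*(e*(m*u*c)*C)
            *(2*(e*(u*s)*(S*m))^2 + (1+e*(u*s)*C)^2*s^2 + e*m^2*(u*s)*C*(1+e*(u*s)*C))
          + 2*(1+e*(u*s)*C)^2*s*c*((e*(u*s)*(S*m))^2 + (1+e*(u*s)*C)^2*s^2)) := by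
    ring
  rw [key]
  have hpos : 0 < 2*(1+e*(u*s)*C)*s^2*(e*(m*u*c)*C)
        *(2*(e*(u*s)*(S*m))^2 + (1+e*(u*s)*C)^2*s^2 + e*m^2*(u*s)*C*(1+e*(u*s)*C))
      + 2*(1+e*(u*s)*C)^2*s*c*((e*(u*s)*(S*m))^2 + (1+e*(u*s)*C)^2*s^2) := by
    positivity
  linarith

/-- key step of the paper's Lemma 1. For every n ≥ 1, every ε ∈ (0,1),
every θ ∈ (0, π/2) and every φ with cos(nφ) > 0, the Christoffel symbol Γ^θ_{φφ} of the
degree-n sectoral harmonic surface is strictly negative. -/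
theorem statement8 (n : ℕ) (hn : 1 ≤ n) (ε : ℝ) (hε0 : 0 < ε) (hε1 : ε < 1)
    (t p : ℝ) (ht : t ∈ Ioo 0 (π / 2)) (hp : 0 < cos (n * p)) :
    Γθφφ (secR n ε) t p < 0 := by
  obtain ⟨ht0, ht2⟩ := ht
  have hs : 0 < sin t := sin_pos_of_pos_of_lt_pi ht0 (by linarith [pi_pos])
  have hc : 0 < cos t := cos_pos_of_mem_Ioo ⟨by linarith [pi_pos], ht2⟩
  have hu : 0 < sin t ^ (n - 1) := pow_pos hs _
  have hm : 0 < (n : ℝ) := by exact_mod_cast Nat.lt_of_lt_of_le Nat.zero_lt_one hn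
  have hsn : sin t ^ n = sin t ^ (n - 1) * sin t := by
    rw [← pow_succ]; congr 1; omega
  have hgdetval : gdet (secR n ε) t p =
      (ε * ((n:ℝ) * sin t ^ (n-1) * cos t) * cos ((n:ℝ)*p) * (1 + ε * sin t ^ n * cos ((n:ℝ)*p)) * sin t) ^ 2
      + ((1 + ε * sin t ^ n * cos ((n:ℝ)*p)) * (ε * sin t ^ n * (sin ((n:ℝ)*p) * n))) ^ 2
      + ((1 + ε * sin t ^ n * cos ((n:ℝ)*p)) ^ 2 * sin t) ^ 2 := by
    simp only [gdet, gθθ, gφφ, gθφ, pθ_secR, pφ_secR, secR]; ring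
  have hrpos : 0 < 1 + ε * sin t ^ n * cos ((n:ℝ)*p) := by
    rw [hsn]; positivity
  have hgdetpos : 0 < gdet (secR n ε) t p := by
    rw [hgdetval]
    have h3 : 0 < ((1 + ε * sin t ^ n * cos ((n:ℝ)*p)) ^ 2 * sin t) ^ 2 := by positivity
    positivity
  rw [Γθφφ_eq_div _ _ _ (ne_of_gt hgdetpos)]
  apply div_neg_of_neg_of_pos _ (by linarith)
  simp only [gφφ, gθφ, pθ_secR, pφ_secR, pφ_gθφ_secR, pθ_gφφ_secR, pφ_gφφ_secR, secR]
  refine lt_of_le_of_lt (le_of_eq ?_)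
    (keyneg ε (n:ℝ) (sin t ^ (n-1)) (sin t) (cos t) (cos ((n:ℝ)*p)) (sin ((n:ℝ)*p))
      hε0 hm hu hs hc hp)
  rw [hsn]; ring
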